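/- Let ρ > 0, ε ∈ [0,1), ν ∈ [0,1], m₁, m₂, α̃, α₂, β, κ∞ ∈ ℝ and ι_c > 0. With e defined as in the critical case η = 0, i.e. e(u) = −((1−ν)²/(1−ε))·(m₂ − m₁(2α̃ρ − α₂m₁)/ρ²)·[𝓘₀(u)/2 − (exp(2ι_c u)/ρ)·L(ρ, −2ι_c, u)] + (ν(1−ν)m₁/(2ρ²(1−ε)))·(α̃ − α₂m₁/ρ)·ρ²·𝓘₁(u) − (α₂ν²m₁²/(4ρ³(1−ε)))·[ρ²·𝓘₁(u) + (1/2)·ρ³·𝓘₂(u) + (1/12)·ρ⁴·𝓘₃(u)], define g(u) = −2βκ∞·((1−ν)²/(1−ε))·(m₂ − m₁(2α̃ρ − α₂m₁)/ρ²)·{𝓘₁(u)/2 − (1/(2ι_c ρ))·[exp(2ι_c u)·L(ρ, −2ι_c, u) − log(1 + ρu/2)]} + (βκ∞ν(1−ν)m₁/(2ρ³(1−ε)))·(α̃ − α₂m₁/ρ)·ρ³·𝓘₂(u) − (βκ∞α₂ν²m₁²/(4ρ⁴(1−ε)))·[ρ³·𝓘₂(u) + (1/3)·ρ⁴·𝓘₃(u)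 + (1/24)·ρ⁵·𝓘₄(u)]. Then g(0) = 0 and g'(u) = 2βκ∞·e(u) for all u ≥ 0. -/

import Mathlib

/-! Integration by parts gives `2ι_c 𝓘_{p+1} + u^{p+1} = (p+1) 𝓘_p`, so `𝓘_{p+1}' = (p+1) 𝓘_p`.
Likewise `exp(2ι_c u) L(ρ, −2ι_c, u)` has derivative `2ι_c exp(2ι_c u) L(ρ, −2ι_c, u) + ρ/(2 + ρu)`,
and subtracting `log(1 + ρu/2)` removes the last term. Differentiating `g` term by term therefore
lowers every `𝓘` index by one and reproduces `2βκ∞ e` coefficient by coefficient. -/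

/-- L(r, λ, t) = r·∫₀ᵗ exp(λs)/(2 + rs) ds. -/
noncomputable def Lfun (r lam t : ℝ) : ℝ := r * ∫ s in (0:ℝ)..t, Real.exp (lam * s) / (2 + r * s)

/-- 𝓘_p(u) = exp(2ι_c u)·∫₀ᵘ s^p·exp(−2ι_c s) ds. -/
noncomputable def Ifun (ιc : ℝ) (p : ℕ) (u : ℝ) : ℝ :=
  Real.exp (2 * ιc * u) * ∫ s in (0:ℝ)..u, s ^ p * Real.exp (-(2 * ιc * s))

/-- e(u) in the critical case η = 0. -/
noncomputable def eCrit (ρ ε ν m₁ m₂ αt α₂ ιc : ℝ) (u : ℝ) : ℝ :=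
  -((1 - ν) ^ 2 / (1 - ε)) * (m₂ - m₁ * (2 * αt * ρ - α₂ * m₁) / ρ ^ 2)
      * (Ifun ιc 0 u / 2 - (Real.exp (2 * ιc * u) / ρ) * Lfun ρ (-(2 * ιc)) u)
    + (ν * (1 - ν) * m₁ / (2 * ρ ^ 2 * (1 - ε))) * (αt - α₂ * m₁ / ρ) * (ρ ^ 2 * Ifun ιc 1 u)
    - (α₂ * ν ^ 2 * m₁ ^ 2 / (4 * ρ ^ 3 * (1 - ε)))
        * (ρ ^ 2 * Ifun ιc 1 u + (1 / 2) * ρ ^ 3 * Ifun ιc 2 u + (1 / 12) * ρ ^ 4 * Ifun ιc 3 u)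

/-- g(u) in the critical case η = 0. -/
noncomputable def gCrit (ρ ε ν m₁ m₂ αt α₂ β κinf ιc : ℝ) (u : ℝ) : ℝ :=
  -(2 * β * κinf) * ((1 - ν) ^ 2 / (1 - ε)) * (m₂ - m₁ * (2 * αt * ρ - α₂ * m₁) / ρ ^ 2)
      * (Ifun ιc 1 u / 2
          - (1 / (2 * ιc * ρ))
              * (Real.exp (2 * ιc * u) * Lfun ρ (-(2 * ιc)) u - Real.log (1 + ρ * u / 2)))
    + (β * κinf * ν * (1 - ν) * m₁ / (2 * ρ ^ 3 * (1 - ε))) * (αt - α₂ * m₁ / ρ)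
        * (ρ ^ 3 * Ifun ιc 2 u)
    - (β * κinf * α₂ * ν ^ 2 * m₁ ^ 2 / (4 * ρ ^ 4 * (1 - ε)))
        * (ρ ^ 3 * Ifun ιc 2 u + (1 / 3) * ρ ^ 4 * Ifun ιc 3 u + (1 / 24) * ρ ^ 5 * Ifun ιc 4 u)

open Real Set

theorem hasDerivAt_exp_mul_integral {g : ℝ → ℝ} {U : Set ℝ} {k u : ℝ} (hU : IsOpen U)
    (hg : ContinuousOn g U) (hsub : uIcc 0 u ⊆ U) :
    HasDerivAt (fun t => exp (k * t) * ∫ s in (0:ℝ)..t, g s)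
      (k * (exp (k * u) * ∫ s in (0:ℝ)..u, g s) + exp (k * u) * g u) u := by
  have hu : U ∈ nhds u := hU.mem_nhds (hsub right_mem_uIcc)
  have hint : HasDerivAt (fun t => ∫ s in (0:ℝ)..t, g s) (g u) u :=
    intervalIntegral.integral_hasDerivAt_right ((hg.mono hsub).intervalIntegrable)
      (hg.stronglyMeasurableAtFilter hU u (mem_of_mem_nhds hu)) (hg.continuousAt hu)
  have hexp : HasDerivAt (fun t => exp (k * t)) (exp (k * u) * k) u := by
    simpa using ((hasDerivAt_id u).const_mul k).exp
  exact (hexp.mul hint).congr_deriv (by ring)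

theorem hasDerivAt_Ifun (ιc : ℝ) (p : ℕ) (u : ℝ) :
    HasDerivAt (Ifun ιc p) (2 * ιc * Ifun ιc p u + u ^ p) u := by
  refine (hasDerivAt_exp_mul_integral isOpen_univ (by fun_prop) (subset_univ _)).congr_deriv ?_
  rw [Ifun, mul_left_comm _ (u ^ p), ← exp_add, add_neg_cancel, exp_zero, mul_one]

theorem Ifun_succ_recurrence (ιc : ℝ) (p : ℕ) (u : ℝ) :
    2 * ιc * Ifun ιc (p + 1) u + u ^ (p + 1) = (p + 1) * Ifun ιc p u := by
  have hderiv : ∀ s : ℝ, HasDerivAt (fun s => s ^ (p + 1) * exp (-(2 * ιc * s)))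
      ((p + 1) * (s ^ p * exp (-(2 * ιc * s))) - 2 * ιc * (s ^ (p + 1) * exp (-(2 * ιc * s))))
      s := by
    intro s
    have hpow : HasDerivAt (fun s : ℝ => s ^ (p + 1)) ((p + 1) * s ^ p) s := by
      simpa using hasDerivAt_pow (p + 1) s
    have hexp : HasDerivAt (fun s => exp (-(2 * ιc * s))) (exp (-(2 * ιc * s)) * -(2 * ιc)) s := by
      simpa using (((hasDerivAt_id s).const_mul (2 * ιc)).neg).exp
    exact (hpow.mul hexp).congr_deriv (by ring)
  have hftc := intervalIntegral.integral_eq_sub_of_hasDerivAt (a := 0) (b := u)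
    (fun s _ => hderiv s) ((by fun_prop : Continuous _).intervalIntegrable _ _)
  rw [intervalIntegral.integral_sub ((by fun_prop : Continuous _).intervalIntegrable _ _)
      ((by fun_prop : Continuous _).intervalIntegrable _ _),
    intervalIntegral.integral_const_mul, intervalIntegral.integral_const_mul] at hftc
  have hexp : exp (2 * ιc * u) * exp (-(2 * ιc * u)) = 1 := by rw [← exp_add]; simp
  simp only [Ifun]
  rw [zero_pow p.succ_ne_zero, zero_mul, sub_zero] at hftc
  linear_combination -exp (2 * ιc * u) * hftc - u ^ (p + 1) * hexp

theorem hasDerivAt_Ifun_succ (ιc : ℝ) (p : ℕ) (u : ℝ) :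
    HasDerivAt (Ifun ιc (p + 1)) ((p + 1) * Ifun ιc p u) u :=
  Ifun_succ_recurrence ιc p u ▸ hasDerivAt_Ifun ιc (p + 1) u

theorem two_add_mul_pos_of_mem_uIcc {r u s : ℝ} (hu : 0 < 2 + r * u) (hs : s ∈ uIcc 0 u) :
    0 < 2 + r * s := by
  rcases le_total 0 u with h | h
  · rw [uIcc_of_le h] at hs
    rcases le_total 0 r with hr | hr <;> nlinarith [hs.1, hs.2]
  · rw [uIcc_of_ge h] at hs
    rcases le_total 0 r with hr | hr <;> nlinarith [hs.1, hs.2]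

theorem hasDerivAt_exp_mul_Lfun {r k u : ℝ} (hu : 0 < 2 + r * u) :
    HasDerivAt (fun t => exp (k * t) * Lfun r (-k) t)
      (k * (exp (k * u) * Lfun r (-k) u) + r / (2 + r * u)) u := by
  set U := {s : ℝ | 0 < 2 + r * s}
  have hU : IsOpen U := isOpen_lt continuous_const (by fun_prop)
  have hg : ContinuousOn (fun s => exp (-k * s) / (2 + r * s)) U :=
    ContinuousOn.div (by fun_prop) (by fun_prop) fun s hs => (hs : 0 < 2 + r * s).ne'
  have hsub : uIcc 0 u ⊆ U := fun s hs => two_add_mul_pos_of_mem_uIcc hu hs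
  have hexp : exp (k * u) * exp (-k * u) = 1 := by rw [← exp_add]; simp
  refine ((hasDerivAt_exp_mul_integral (k := k) hU hg hsub).const_mul r).congr_of_eventuallyEq
    (Filter.Eventually.of_forall fun t => by simp only [Lfun]; ring) |>.congr_deriv ?_
  rw [← mul_div_assoc, hexp, Lfun]
  ring

theorem hasDerivAt_exp_mul_Lfun_sub_log {r k u : ℝ} (hu : 0 < 2 + r * u) :
    HasDerivAt (fun t => exp (k * t) * Lfun r (-k) t - log (1 + r * t / 2))
      (k * (exp (k * u) * Lfun r (-k) u)) u := by
  have hlog : HasDerivAt (fun t => log (1 + r * t / 2)) (r / (2 + r * u)) u := by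
    have hlin : HasDerivAt (fun t => 1 + r * t / 2) (r / 2) u := by
      simpa using (((hasDerivAt_id u).const_mul r).div_const 2).const_add 1
    refine (hlin.log (by linarith)).congr_deriv ?_
    field_simp
  exact ((hasDerivAt_exp_mul_Lfun hu).sub hlog).congr_deriv (by ring)

theorem gCrit_ODE_general (ρ ε ν m₁ m₂ αt α₂ β κinf ιc : ℝ) (hρ : 0 < ρ)
    (hιc : 0 < ιc) :
    gCrit ρ ε ν m₁ m₂ αt α₂ β κinf ιc 0 = 0 ∧
    ∀ u : ℝ, 0 ≤ u →
      HasDerivAt (gCrit ρ ε ν m₁ m₂ αt α₂ β κinf ιc)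
        (2 * β * κinf * eCrit ρ ε ν m₁ m₂ αt α₂ ιc u) u := by
  refine ⟨by simp [gCrit, Ifun, Lfun], fun u hu => ?_⟩
  have hI := hasDerivAt_Ifun_succ ιc
  have hB := hasDerivAt_exp_mul_Lfun_sub_log (k := 2 * ιc) (show 0 < 2 + ρ * u by positivity)
  refine (((((hI 0 u).div_const 2).sub (hB.const_mul _)).const_mul _).add
    (((hI 1 u).const_mul _).const_mul _) |>.sub
    (((((hI 1 u).const_mul _).add ((hI 2 u).const_mul _)).add ((hI 3 u).const_mul _)).const_mul
      _)).congr_deriv ?_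
  rw [eCrit]
  push_cast
  field_simp
  ring

theorem gCrit_ODE (ρ ε ν m₁ m₂ αt α₂ β κinf ιc : ℝ) (hρ : 0 < ρ)
    (hε : ε ∈ Set.Ico (0:ℝ) 1) (hν : ν ∈ Set.Icc (0:ℝ) 1) (hιc : 0 < ιc) :
    gCrit ρ ε ν m₁ m₂ αt α₂ β κinf ιc 0 = 0 ∧
    ∀ u : ℝ, 0 ≤ u →
      HasDerivAt (gCrit ρ ε ν m₁ m₂ αt α₂ β κinf ιc)
        (2 * β * κinf * eCrit ρ ε ν m₁ m₂ αt α₂ ιc u) u :=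
  gCrit_ODE_general ρ ε ν m₁ m₂ αt α₂ β κinf ιc hρ hιc
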